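/- arXiv:2303.06850 — 8 statements merged into one kernel-verified Lean document; each statement's English description precedes it below -/
import Mathlib

section
/- Let S(q₁,…,q_s) be the multiplicative semigroup generated by pairwise coprime integers q₁,…,q_s ≥ 2. Then |S(q₁,…,q_s) ∩ [1,n]| = K_s (log n)^s + O((log n)^{s−1}) as n → ∞, where K_s = (1/s!)·∏_{j=1}^s (1/log q_j). -/
/-!
Coprimality makes `a ↦ ∏ q_j ^ a_j` injective, so the count is the number of lattice points
`a ∈ ℕ^s` in the simplex `∑ a_j log q_j ≤ log n`. Slicing the simplex `∑ a_j c_j ≤ x` by its last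
coordinate and comparing the slice sum with Riemann sums of `t ↦ t ^ (s - 1)` shows, by induction
on `s`, that `s! ∏ c_j` times its number of lattice points lies between `x ^ s` and
`(x + ∑ c_j) ^ s`, two quantities that differ by `O(x ^ (s - 1))`.
-/

open Finset Function

section PowerSums

variable {R : Type*} [CommRing R] [LinearOrder R] [IsStrictOrderedRing R]

theorem pow_succ_sub_pow_succ_le {a b : R} (hb : 0 ≤ b) (hba : b ≤ a) (n : ℕ) :
    a ^ (n + 1) - b ^ (n + 1) ≤ (n + 1) * (a - b) * a ^ n := by
  have ha : 0 ≤ a := hb.trans hba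
  have := abs_pow_sub_pow_le a b (n + 1)
  rwa [abs_of_nonneg (sub_nonneg.2 (pow_le_pow_left₀ hb hba _)), abs_of_nonneg (sub_nonneg.2 hba),
    abs_of_nonneg ha, abs_of_nonneg hb, max_eq_left hba, Nat.add_sub_cancel, Nat.cast_succ,
    mul_comm (a - b)] at this

theorem mul_pow_le_pow_succ_sub_pow_succ {a b : R} (hb : 0 ≤ b) (hba : b ≤ a) (n : ℕ) :
    (n + 1) * (a - b) * b ^ n ≤ a ^ (n + 1) - b ^ (n + 1) := by
  rw [← geom_sum₂_mul, Nat.add_sub_cancel]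
  calc (n + 1) * (a - b) * b ^ n = (∑ _i ∈ range (n + 1), b ^ n) * (a - b) := by
        rw [sum_const, card_range, nsmul_eq_mul]; push_cast; ring
    _ ≤ (∑ i ∈ range (n + 1), a ^ i * b ^ (n - i)) * (a - b) := by
        gcongr with i hi
        rw [← pow_mul_pow_sub b (Nat.lt_succ_iff.1 (mem_range.1 hi))]
        gcongr

theorem pow_succ_le_mul_sum_range_pow {c x : R} {K : ℕ} (hc : 0 ≤ c) (hKx : K * c ≤ x)
    (hxK : x ≤ (K + 1) * c) (s : ℕ) :
    x ^ (s + 1) ≤ (s + 1) * c * ∑ k ∈ range (K + 1), (x - k * c) ^ s := by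
  set F : ℕ → R := fun k => max (x - k * c) 0 ^ (s + 1)
  have step : ∀ k ∈ range (K + 1), F k - F (k + 1) ≤ (s + 1) * c * (x - k * c) ^ s := by
    intro k hk
    have hkx : k * c ≤ x :=
      (mul_le_mul_of_nonneg_right (Nat.cast_le.2 (Nat.lt_succ_iff.1 (mem_range.1 hk))) hc).trans hKx
    have hB : 0 ≤ max (x - (k + 1 : ℕ) * c) 0 := le_max_right _ _
    have hBA : max (x - (k + 1 : ℕ) * c) 0 ≤ x - k * c :=
      max_le (by push_cast; linarith) (by linarith)
    have hAB : x - k * c - max (x - (k + 1 : ℕ) * c) 0 ≤ c := by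
      have := le_max_left (x - (k + 1 : ℕ) * c) 0
      push_cast at this ⊢; linarith
    calc F k - F (k + 1) = (x - k * c) ^ (s + 1) - max (x - (k + 1 : ℕ) * c) 0 ^ (s + 1) := by
          simp only [F, max_eq_left (sub_nonneg.2 hkx)]
      _ ≤ (s + 1) * (x - k * c - max (x - (k + 1 : ℕ) * c) 0) * (x - k * c) ^ s :=
          pow_succ_sub_pow_succ_le hB hBA s
      _ ≤ (s + 1) * c * (x - k * c) ^ s := by gcongr
  have hx : 0 ≤ x := (mul_nonneg (Nat.cast_nonneg K) hc).trans hKx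
  have hF0 : F 0 = x ^ (s + 1) := by simp [F, hx]
  have hFK : F (K + 1) = 0 := by
    simp only [F]; push_cast
    rw [max_eq_right (by linarith), zero_pow s.succ_ne_zero]
  have := sum_le_sum step
  rw [sum_range_sub', hF0, hFK, sub_zero] at this
  rwa [mul_sum]

theorem mul_sum_range_pow_le {c y : R} {K : ℕ} (hc : 0 ≤ c) (hKy : K * c ≤ y) (s : ℕ) :
    (s + 1) * c * ∑ k ∈ range (K + 1), (y - k * c) ^ s ≤ (y + c) ^ (s + 1) := by
  set G : ℕ → R := fun k => (y + c - k * c) ^ (s + 1)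
  have step : ∀ k ∈ range (K + 1), (s + 1) * c * (y - k * c) ^ s ≤ G k - G (k + 1) := by
    intro k hk
    have hky : k * c ≤ y :=
      (mul_le_mul_of_nonneg_right (Nat.cast_le.2 (Nat.lt_succ_iff.1 (mem_range.1 hk))) hc).trans hKy
    have := mul_pow_le_pow_succ_sub_pow_succ (sub_nonneg.2 hky) (le_add_of_nonneg_right hc) s
    simp only [G]; push_cast
    convert this using 2 <;> ring
  have hGK : 0 ≤ G (K + 1) := by
    simp only [G]; push_cast
    exact pow_nonneg (by linarith) _
  have := sum_le_sum step
  rw [sum_range_sub'] at this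
  rw [mul_sum]
  simp only [G, Nat.cast_zero, zero_mul, sub_zero] at this hGK ⊢
  linarith

end PowerSums

theorem floor_mul_le_and_le_floor_succ_mul {c x : ℝ} (hc : 0 < c) (hx : 0 ≤ x) :
    ⌊x / c⌋₊ * c ≤ x ∧ x ≤ (⌊x / c⌋₊ + 1) * c :=
  ⟨(le_div_iff₀ hc).1 (Nat.floor_le (div_nonneg hx hc.le)),
    ((div_lt_iff₀ hc).1 (Nat.lt_floor_add_one _)).le⟩

def simplexLatticePoints {s : ℕ} (c : Fin s → ℝ) (x : ℝ) : Set (Fin s → ℕ) :=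
  {a | ∑ j, (a j : ℝ) * c j ≤ x}

namespace simplexLatticePoints

variable {s : ℕ} {c : Fin s → ℝ} {x : ℝ}

theorem coord_le_floor (hc : ∀ j, 0 < c j) {a : Fin s → ℕ} (ha : a ∈ simplexLatticePoints c x)
    (j : Fin s) : a j ≤ ⌊x / c j⌋₊ :=
  Nat.le_floor <| (le_div_iff₀ (hc j)).2 <| (single_le_sum (f := fun i => (a i : ℝ) * c i)
    (fun i _ => mul_nonneg (Nat.cast_nonneg _) (hc i).le) (mem_univ j)).trans ha

theorem finite (hc : ∀ j, 0 < c j) (x : ℝ) : (simplexLatticePoints c x).Finite :=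
  (Set.finite_Iic fun j => ⌊x / c j⌋₊).subset fun _ ha j => coord_le_floor hc ha j

theorem snoc_mem_iff {c : Fin (s + 1) → ℝ} {b : Fin s → ℕ} {k : ℕ} :
    Fin.snoc (α := fun _ => ℕ) b k ∈ simplexLatticePoints c x ↔
      b ∈ simplexLatticePoints (fun j => c j.castSucc) (x - k * c (Fin.last s)) := by
  simp only [simplexLatticePoints, Set.mem_ofPred_eq, Fin.sum_univ_castSucc, Fin.snoc_castSucc,
    Fin.snoc_last, le_sub_iff_add_le]

theorem ncard_succ {c : Fin (s + 1) → ℝ} (hc : ∀ j, 0 < c j) (x : ℝ) :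
    (simplexLatticePoints c x).ncard = ∑ k ∈ range (⌊x / c (Fin.last s)⌋₊ + 1),
      (simplexLatticePoints (fun j => c j.castSucc) (x - k * c (Fin.last s))).ncard := by
  have hT := finite hc x
  have hT' k := finite (fun j => hc j.castSucc) (x - k * c (Fin.last s))
  have fiber : ∀ k, {a ∈ hT.toFinset | a (Fin.last s) = k} =
      (hT' k).toFinset.map ⟨(Fin.snoc · k), fun _ _ h => by simpa using congrArg Fin.init h⟩ := by
    intro k
    ext a
    simp only [mem_filter, Set.Finite.mem_toFinset, mem_map]
    constructor
    · rintro ⟨ha, rfl⟩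
      refine ⟨Fin.init a, ?_, Fin.snoc_init_self a⟩
      rwa [← snoc_mem_iff, Fin.snoc_init_self]
    · rintro ⟨b, hb, rfl⟩
      exact ⟨snoc_mem_iff.2 hb, Fin.snoc_last (α := fun _ => ℕ) _ _⟩
  rw [Set.ncard_eq_toFinset_card _ hT, card_eq_sum_card_fiberwise fun a ha =>
    mem_range_succ_iff.2 (coord_le_floor hc (hT.mem_toFinset.1 ha) (Fin.last s))]
  refine sum_congr rfl fun k _ => ?_
  rw [fiber, card_map, Set.ncard_eq_toFinset_card _ (hT' k)]

theorem factorial_mul_prod_mul_ncard_succ {c : Fin (s + 1) → ℝ} (hc : ∀ j, 0 < c j) (x : ℝ) :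
    (s + 1).factorial * (∏ j, c j) * (simplexLatticePoints c x).ncard =
      (s + 1) * c (Fin.last s) * ∑ k ∈ range (⌊x / c (Fin.last s)⌋₊ + 1),
        s.factorial * (∏ j : Fin s, c j.castSucc) *
          (simplexLatticePoints (fun j : Fin s => c j.castSucc)
            (x - k * c (Fin.last s))).ncard := by
  rw [ncard_succ hc, Fin.prod_univ_castSucc, Nat.factorial_succ, ← mul_sum]
  push_cast
  ring

theorem pow_le_mul_ncard (hc : ∀ j, 0 < c j) (hx : 0 ≤ x) :
    x ^ s ≤ s.factorial * (∏ j, c j) * (simplexLatticePoints c x).ncard := by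
  induction s generalizing x with
  | zero => simp [simplexLatticePoints, hx]
  | succ s ih =>
    have hcl := hc (Fin.last s)
    obtain ⟨hKx, hxK⟩ := floor_mul_le_and_le_floor_succ_mul hcl hx
    rw [factorial_mul_prod_mul_ncard_succ hc]
    refine (pow_succ_le_mul_sum_range_pow hcl.le hKx hxK s).trans ?_
    gcongr with k hk
    refine ih (fun j => hc j.castSucc) (sub_nonneg.2 (hKx.trans' ?_))
    gcongr
    exact Nat.lt_succ_iff.1 (mem_range.1 hk)

theorem mul_ncard_le_pow (hc : ∀ j, 0 < c j) (hx : 0 ≤ x) :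
    s.factorial * (∏ j, c j) * (simplexLatticePoints c x).ncard ≤ (x + ∑ j, c j) ^ s := by
  induction s generalizing x with
  | zero => simp [Set.subsingleton_of_subsingleton]
  | succ s ih =>
    have hcl := hc (Fin.last s)
    obtain ⟨hKx, -⟩ := floor_mul_le_and_le_floor_succ_mul hcl hx
    rw [factorial_mul_prod_mul_ncard_succ hc, Fin.sum_univ_castSucc, ← add_assoc]
    refine le_trans ?_ (mul_sum_range_pow_le hcl.le
      (hKx.trans (le_add_of_nonneg_right (sum_nonneg fun j _ => (hc j.castSucc).le))) s)
    gcongr with k hk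
    have hkx : k * c (Fin.last s) ≤ x :=
      hKx.trans' (by gcongr; exact Nat.lt_succ_iff.1 (mem_range.1 hk))
    exact (ih (fun j => hc j.castSucc) (sub_nonneg.2 hkx)).trans_eq (by ring)

theorem abs_ncard_sub_le (hc : ∀ j, 0 < c j) (hx : 0 ≤ x) :
    |(simplexLatticePoints c x).ncard - x ^ s / (s.factorial * ∏ j, c j)| ≤
      s * (∑ j, c j) * (x + ∑ j, c j) ^ (s - 1) / (s.factorial * ∏ j, c j) := by
  have hP : 0 < s.factorial * ∏ j, c j := by
    have : 0 < ∏ j, c j := prod_pos fun j _ => hc j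
    positivity
  have hS : 0 ≤ ∑ j, c j := sum_nonneg fun j _ => (hc j).le
  have lower := (div_le_iff₀' hP).2 (pow_le_mul_ncard hc hx)
  have upper := (le_div_iff₀' hP).2 (mul_ncard_le_pow hc hx)
  have growth := abs_pow_sub_pow_le (x + ∑ j, c j) x s
  have hxS : x ≤ x + ∑ j, c j := le_add_of_nonneg_right hS
  rw [add_sub_cancel_left, abs_of_nonneg hS, abs_of_nonneg (hx.trans hxS), abs_of_nonneg hx,
    max_eq_left hxS, abs_of_nonneg (sub_nonneg.2 (pow_le_pow_left₀ hx hxS s))] at growth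
  rw [abs_of_nonneg (by linarith)]
  calc _ ≤ ((x + ∑ j, c j) ^ s - x ^ s) / (s.factorial * ∏ j, c j) := by
        rw [sub_div]; linarith
    _ ≤ _ := by gcongr; linarith

end simplexLatticePoints

theorem prod_pow_injective_of_pairwise_coprime {s : ℕ} {q : Fin s → ℕ} (hq : ∀ j, 1 < q j)
    (hcop : Pairwise (Nat.Coprime on q)) :
    Injective fun a : Fin s → ℕ => ∏ j, q j ^ a j := by
  have le_of_eq {a b : Fin s → ℕ} (h : ∏ j, q j ^ a j = ∏ j, q j ^ b j) (j : Fin s) :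
      a j ≤ b j := by
    have hdvd : q j ^ a j ∣ q j ^ b j * ∏ i ∈ univ.erase j, q i ^ b i := by
      rw [mul_prod_erase univ (fun i => q i ^ b i) (mem_univ j), ← h]
      exact dvd_prod_of_mem _ (mem_univ j)
    have hcop' : Nat.Coprime (q j ^ a j) (∏ i ∈ univ.erase j, q i ^ b i) :=
      Nat.Coprime.prod_right fun i hi =>
        (hcop (ne_of_mem_erase hi).symm).pow (a j) (b i)
    exact (Nat.pow_dvd_pow_iff_le_right (hq j)).1 (hcop'.dvd_of_dvd_mul_right hdvd)
  exact fun a b h => funext fun j => (le_of_eq h j).antisymm (le_of_eq h.symm j)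

theorem setOf_prod_pow_mem_Icc_eq_image {s : ℕ} {q : Fin s → ℕ} (hq : ∀ j, 0 < q j) {n : ℕ}
    (hn : 1 ≤ n) :
    {m : ℕ | m ∈ Set.Icc 1 n ∧ ∃ a : Fin s → ℕ, m = ∏ j, q j ^ a j} =
      (fun a => ∏ j, q j ^ a j) '' simplexLatticePoints (fun j => Real.log (q j)) (Real.log n) := by
  have mem_iff (a : Fin s → ℕ) :
      a ∈ simplexLatticePoints (fun j => Real.log (q j)) (Real.log n) ↔ ∏ j, q j ^ a j ≤ n := by
    have hpos : (0 : ℝ) < (∏ j, q j ^ a j : ℕ) :=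
      Nat.cast_pos.2 (prod_pos fun j _ => pow_pos (hq j) _)
    rw [← Nat.cast_le (α := ℝ), ← Real.log_le_log_iff hpos (by positivity), Nat.cast_prod,
      Real.log_prod fun j _ => (Nat.cast_pos.2 (pow_pos (hq j) _)).ne']
    simp only [simplexLatticePoints, Set.mem_ofPred_eq, Nat.cast_pow, Real.log_pow]
  ext m
  constructor
  · rintro ⟨⟨-, hmn⟩, a, rfl⟩
    exact ⟨a, (mem_iff a).2 hmn, rfl⟩
  · rintro ⟨a, ha, rfl⟩
    exact ⟨⟨one_le_prod' fun j _ => Nat.one_le_pow _ _ (hq j), (mem_iff a).1 ha⟩, a, rfl⟩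

open Finset in
theorem semigroup_counting_asymp_general (s : ℕ) (q : Fin s → ℕ)
    (hq2 : ∀ j, 2 ≤ q j)
    (hcop : ∀ i j, i ≠ j → Nat.Coprime (q i) (q j)) :
    ∃ C : ℝ, 0 < C ∧ ∀ n : ℕ, 2 ≤ n →
      |({m : ℕ | m ∈ Set.Icc 1 n ∧ ∃ a : Fin s → ℕ, m = ∏ j, q j ^ a j}.ncard : ℝ) -
          ((1 / (Nat.factorial s : ℝ)) * ∏ j, (1 / Real.log (q j))) * (Real.log n) ^ s|
        ≤ C * (Real.log n) ^ (s - 1) := by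
  set c : Fin s → ℝ := fun j => Real.log (q j)
  have hc : ∀ j, 0 < c j := fun j => Real.log_pos (by exact_mod_cast hq2 j)
  set P := s.factorial * ∏ j, c j
  set S := ∑ j, c j
  have hP : 0 < P := by
    have : 0 < ∏ j, c j := prod_pos fun j _ => hc j
    positivity
  have hS : 0 ≤ S := sum_nonneg fun j _ => (hc j).le
  have hlog2 : 0 < Real.log 2 := Real.log_pos one_lt_two
  refine ⟨s * S * (1 + S / Real.log 2) ^ (s - 1) / P + 1, by positivity, fun n hn => ?_⟩
  set x := Real.log n
  have hx : Real.log 2 ≤ x := Real.log_le_log two_pos (by exact_mod_cast hn)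
  have hK : 1 / (s.factorial : ℝ) * ∏ j, (1 / Real.log (q j)) = P⁻¹ := by
    simp only [P, c, one_div, mul_inv, prod_inv_distrib]
  have hxS : x + S ≤ (1 + S / Real.log 2) * x := by
    have : S ≤ S / Real.log 2 * x := by
      rw [div_mul_eq_mul_div, le_div_iff₀ hlog2]; gcongr
    linarith
  rw [setOf_prod_pow_mem_Icc_eq_image (fun j => by have := hq2 j; omega) (by omega),
    Set.ncard_image_of_injective _ (prod_pow_injective_of_pairwise_coprime hq2 hcop), hK,
    ← div_eq_inv_mul]
  calc _ ≤ s * S * (x + S) ^ (s - 1) / P := simplexLatticePoints.abs_ncard_sub_le hc (by linarith)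
    _ ≤ s * S * ((1 + S / Real.log 2) * x) ^ (s - 1) / P := by gcongr
    _ ≤ _ := by
      rw [mul_pow, add_mul, one_mul, ← mul_assoc, mul_div_right_comm]
      have : 0 ≤ x ^ (s - 1) := by positivity
      linarith

open Finset in
/-- Marstrand's estimate: for pairwise coprime `q₁,…,q_s ≥ 2`,
`|S(q₁,…,q_s) ∩ [1,n]| = K_s (log n)^s + O((log n)^{s-1})` where
`K_s = (1/s!) ∏ 1/log q_j`. -/
theorem semigroup_counting_asymp (s : ℕ) (hs : 1 ≤ s) (q : Fin s → ℕ)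
    (hq2 : ∀ j, 2 ≤ q j)
    (hcop : ∀ i j, i ≠ j → Nat.Coprime (q i) (q j)) :
    ∃ C : ℝ, 0 < C ∧ ∀ n : ℕ, 2 ≤ n →
      |({m : ℕ | m ∈ Set.Icc 1 n ∧ ∃ a : Fin s → ℕ, m = ∏ j, q j ^ a j}.ncard : ℝ) -
          ((1 / (Nat.factorial s : ℝ)) * ∏ j, (1 / Real.log (q j))) * (Real.log n) ^ s|
        ≤ C * (Real.log n) ^ (s - 1) :=
  semigroup_counting_asymp_general s q hq2 hcop
end

section
/- Let n ∈ ℕ, and suppose there exist j, k with j + k = n and 3^k < 2^j < 3^{k+1}. Let β = log 3/(log 2 + log 3). Then {nβ} ∈ (1 − β, 1), where {·} denotes fractional part. Conversely, if {nβ} ∈ (1 − β, 1) then such j, k exist. -/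
/-!
Taking logarithms, with `j + k = n` the condition `3^k < 2^j < 3^(k+1)` becomes
`n β < j < n β + β`. Since `0 < β < 1`, an integer in that open interval is automatically
a natural number `≤ n`, and it exists iff the first integer above `n β`, namely
`⌊n β⌋ + 1`, lies below `n β + β`, i.e. iff `1 - β < {n β}`.
-/

open Real

theorem exists_int_btwn_iff_one_sub_lt_fract {α : Type*} [CommRing α] [LinearOrder α]
    [IsStrictOrderedRing α] [FloorRing α] (x β : α) :
    (∃ m : ℤ, x < m ∧ (m : α) < x + β) ↔ 1 - β < Int.fract x := by
  rw [Int.fract]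
  constructor
  · rintro ⟨m, hxm, hmx⟩
    have : (⌊x⌋ : α) + 1 ≤ m := by exact_mod_cast Int.floor_lt.2 hxm
    linarith
  · intro h
    exact ⟨⌊x⌋ + 1, by push_cast; exact Int.lt_floor_add_one x, by push_cast; linarith⟩

theorem exists_nat_le_iff_exists_int {β : ℝ} (n : ℕ) (hβ0 : 0 ≤ β) (hβ1 : β ≤ 1) :
    (∃ j : ℕ, j ≤ n ∧ n * β < j ∧ (j : ℝ) < n * β + β) ↔
      ∃ m : ℤ, n * β < m ∧ (m : ℝ) < n * β + β := by
  refine ⟨fun ⟨j, _, h⟩ => ⟨j, by exact_mod_cast h⟩, fun ⟨m, hlo, hhi⟩ => ?_⟩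
  have hm : (0 : ℝ) ≤ m := hlo.le.trans' (by positivity)
  lift m to ℕ using by exact_mod_cast hm
  refine ⟨m, ?_, by exact_mod_cast hlo, by exact_mod_cast hhi⟩
  have : (m : ℝ) < n + 1 := calc
    (m : ℝ) < (n + 1) * β := by rw [add_one_mul]; exact_mod_cast hhi
    _ ≤ n + 1 := mul_le_of_le_one_right (by positivity) hβ1
  exact_mod_cast Nat.lt_succ_iff.1 (by exact_mod_cast this)

theorem pow_lt_pow_iff_mul_log_lt {a b : ℝ} (ha : 0 < a) (hb : 0 < b) (m n : ℕ) :
    a ^ m < b ^ n ↔ m * log a < n * log b := by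
  rw [← log_lt_log_iff (pow_pos ha m) (pow_pos hb n), log_pow, log_pow]

theorem pow_interlace_iff {p q : ℕ} (hp : 1 < p) (hq : 1 < q) {j k n : ℕ} (hjk : j + k = n) :
    (q ^ k < p ^ j ∧ p ^ j < q ^ (k + 1)) ↔
      (n * (log q / (log p + log q)) < j ∧
        (j : ℝ) < n * (log q / (log p + log q)) + log q / (log p + log q)) := by
  have hp' : (1 : ℝ) < p := by exact_mod_cast hp
  have hq' : (1 : ℝ) < q := by exact_mod_cast hq
  have hlog : 0 < log p + log q := add_pos (log_pos hp') (log_pos hq')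
  simp only [← Nat.cast_lt (α := ℝ), Nat.cast_pow]
  rw [pow_lt_pow_iff_mul_log_lt (by positivity) (by positivity),
    pow_lt_pow_iff_mul_log_lt (by positivity) (by positivity), ← mul_div_assoc,
    div_lt_iff₀ hlog, ← add_div, ← add_one_mul, lt_div_iff₀ hlog, ← hjk]
  push_cast
  constructor <;> rintro ⟨h1, h2⟩ <;> constructor <;> linarith

theorem exists_pow_interlace_iff {p q : ℕ} (hp : 1 < p) (hq : 1 < q) (n : ℕ) :
    (∃ j k : ℕ, j + k = n ∧ q ^ k < p ^ j ∧ p ^ j < q ^ (k + 1)) ↔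
      ∃ j : ℕ, j ≤ n ∧ n * (log q / (log p + log q)) < j ∧
        (j : ℝ) < n * (log q / (log p + log q)) + log q / (log p + log q) := by
  constructor
  · rintro ⟨j, k, hjk, h⟩
    exact ⟨j, by omega, (pow_interlace_iff hp hq hjk).1 h⟩
  · rintro ⟨j, hj, h⟩
    exact ⟨j, n - j, by omega, (pow_interlace_iff hp hq (Nat.add_sub_cancel' hj)).2 h⟩

/-- Sturmian coding of the interlacing of powers of 2 and 3: with
`β = log 3/(log 2 + log 3)`, there exist `j + k = n` with `3^k < 2^j < 3^{k+1}`
iff the fractional part of `n β` lies in `(1 - β, 1)`. -/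
theorem sturmian_coding (n : ℕ) :
    (∃ j k : ℕ, j + k = n ∧ 3 ^ k < 2 ^ j ∧ 2 ^ j < 3 ^ (k + 1)) ↔
      Int.fract ((n : ℝ) * (Real.log 3 / (Real.log 2 + Real.log 3))) ∈
        Set.Ioo (1 - Real.log 3 / (Real.log 2 + Real.log 3)) 1 := by
  have hlog2 : 0 < log 2 := log_pos one_lt_two
  have hlog3 : 0 < log 3 := log_pos (by norm_num)
  set β := log 3 / (log 2 + log 3)
  have hβ0 : 0 < β := by positivity
  have hβ1 : β < 1 := (div_lt_one (by positivity)).2 (lt_add_of_pos_left _ hlog2)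
  calc (∃ j k : ℕ, j + k = n ∧ 3 ^ k < 2 ^ j ∧ 2 ^ j < 3 ^ (k + 1))
      ↔ ∃ j : ℕ, j ≤ n ∧ n * β < j ∧ (j : ℝ) < n * β + β := by
        simpa only [Nat.cast_ofNat] using
          exists_pow_interlace_iff (p := 2) (q := 3) one_lt_two (by norm_num) n
    _ ↔ ∃ m : ℤ, n * β < m ∧ (m : ℝ) < n * β + β := exists_nat_le_iff_exists_int n hβ0.le hβ1.le
    _ ↔ 1 - β < Int.fract (n * β) := exists_int_btwn_iff_one_sub_lt_fract _ _
    _ ↔ _ := by simp [Int.fract_lt_one]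
end

section
/- If Furstenberg's conjecture fails, i.e. there exists a continuous (atomless) Borel probability measure μ on the circle 𝕋 = ℝ/ℤ with μ̂(2n) = μ̂(3n) = μ̂(n) for all n ∈ ℤ and μ ≠ Lebesgue measure, then there exists an irrational x ∈ 𝕋 such that the sequence (s_n x) is not uniformly distributed mod 1, where (s_n) enumerates S = {2^j 3^k}. Equivalently: if the set W(S) of x for which (s_n x) is not uniformly distributed equals ℚ ∩ [0,1), then Furstenberg's conjecture holds. -/
/-!
If every irrational `x` made `(s_n x)` equidistributed, Weyl's criterion would give
`(1/N) ∑_{n<N} e(h s_n y) → 0` for every `y ∉ ℚ/ℤ`, hence `μ`-almost everywhere since the atomless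
measure `μ` gives the countable set `ℚ/ℤ` mass zero. By `×2×3`-invariance each of these averages
has `μ`-integral `μ̂(-h)`, so dominated convergence forces `μ̂(-h) = 0` for all `h ≠ 0`, and a
probability measure on the circle with vanishing nonzero Fourier coefficients is Lebesgue measure.
-/

open MeasureTheory Filter Complex Real

theorem MeasureTheory.Measure.ext_of_integral_eq_on_dense_span {X : Type*}
    [TopologicalSpace X] [CompactSpace X] [MeasurableSpace X] [BorelSpace X]
    [HasOuterApproxClosed X] {μ ν : Measure X} [IsFiniteMeasure μ] [IsFiniteMeasure ν]
    {s : Set C(X, ℂ)} (hs : Dense (Submodule.span ℂ s : Set C(X, ℂ)))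
    (h : ∀ f ∈ s, ∫ x, f x ∂μ = ∫ x, f x ∂ν) : μ = ν := by
  let I (ρ : Measure X) [IsFiniteMeasure ρ] : C(X, ℂ) →L[ℂ] ℂ :=
    (L1.integralCLM' ℂ).comp (ContinuousMap.toLp 1 ρ ℂ)
  have hI (ρ : Measure X) [IsFiniteMeasure ρ] (f : C(X, ℂ)) : I ρ f = ∫ x, f x ∂ρ := by
    rw [ContinuousLinearMap.comp_apply, ← L1.integral_eq', L1.integral_eq_integral]
    exact integral_congr_ae (ContinuousMap.coeFn_toLp ρ f)
  have hIμν : I μ = I ν := ContinuousLinearMap.ext_on hs fun f hf => by rw [hI, hI, h f hf]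
  refine ext_of_forall_integral_eq_of_IsFiniteMeasure fun f => ?_
  have := congr($hIμν (ContinuousMap.mk (fun x => (f x : ℂ)) (by fun_prop)))
  rw [hI, hI] at this
  simp only [ContinuousMap.coe_mk] at this
  exact_mod_cast this

namespace AddCircle

variable {T : ℝ}

theorem ae_irrational_of_coe_eq (μ : Measure (AddCircle T)) [NullSingletonClass μ] :
    ∀ᵐ y ∂μ, ∀ x : ℝ, (x : AddCircle T) = y → Irrational x := by
  have hnull : μ (Set.range fun q : ℚ => ((q : ℝ) : AddCircle T)) = 0 :=
    (Set.countable_range _).measure_zero μ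
  filter_upwards [measure_eq_zero_iff_ae_notMem.1 hnull] with y hy
  rintro x rfl ⟨q, rfl⟩
  exact hy ⟨q, rfl⟩

variable [Fact (0 < T)]

theorem measure_ext_of_integral_fourier_eq {μ ν : Measure (AddCircle T)} [IsFiniteMeasure μ]
    [IsFiniteMeasure ν] (h : ∀ n : ℤ, ∫ x, fourier n x ∂μ = ∫ x, fourier n x ∂ν) : μ = ν :=
  Measure.ext_of_integral_eq_on_dense_span
    (Submodule.dense_iff_topologicalClosure_eq_top.2 span_fourier_closure_eq_top)
    (by rintro _ ⟨n, rfl⟩; exact h n)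

theorem integral_fourier_haarAddCircle_of_ne_zero {n : ℤ} (hn : n ≠ 0) :
    ∫ x : AddCircle T, fourier n x ∂haarAddCircle = 0 :=
  integral_eq_zero_of_add_right_eq_neg (fourier_add_half_inv_index hn (Fact.out : 0 < T))

theorem eq_haarAddCircle_of_integral_fourier_eq_zero {μ : Measure (AddCircle T)}
    [IsProbabilityMeasure μ] (h : ∀ n : ℤ, n ≠ 0 → ∫ x, fourier n x ∂μ = 0) :
    μ = haarAddCircle := by
  refine measure_ext_of_integral_fourier_eq fun n => ?_
  rcases eq_or_ne n 0 with rfl | hn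
  · simp
  · rw [h n hn, integral_fourier_haarAddCircle_of_ne_zero hn]

end AddCircle

theorem pow_mul_apply_eq {M α : Type*} [Monoid M] {f : M → α} {a : M}
    (h : ∀ n, f (a * n) = f n) (j : ℕ) (n : M) : f (a ^ j * n) = f n := by
  induction j with
  | zero => rw [pow_zero, one_mul]
  | succ j ih => rw [pow_succ', mul_assoc, h, ih]

theorem eq_zero_of_integral_eq_of_ae_tendsto_cesaro {X 𝕜 : Type*} [MeasurableSpace X]
    [RCLike 𝕜] {μ : Measure X} [IsFiniteMeasure μ] {g : ℕ → X → 𝕜} {c : 𝕜}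
    (hg : ∀ n, AEStronglyMeasurable (g n) μ) (hg_le : ∀ n x, ‖g n x‖ ≤ 1)
    (hc : ∀ n, ∫ x, g n x ∂μ = c)
    (hlim : ∀ᵐ x ∂μ, Tendsto (fun N : ℕ => (∑ n ∈ Finset.range N, g n x) / N) atTop (nhds 0)) :
    c = 0 := by
  have hint : ∀ n, Integrable (g n) μ := fun n =>
    Integrable.of_bound (hg n) 1 (ae_of_all _ (hg_le n))
  have hmean : ∀ N : ℕ, 1 ≤ N → ∫ x, (∑ n ∈ Finset.range N, g n x) / N ∂μ = c := by
    intro N hN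
    rw [integral_div, integral_finsetSum _ fun n _ => hint n]
    simp only [hc, Finset.sum_const, Finset.card_range, nsmul_eq_mul]
    exact mul_div_cancel_left₀ c (Nat.cast_ne_zero.2 (by omega))
  have hmean_le : ∀ (N : ℕ) x, ‖(∑ n ∈ Finset.range N, g n x) / N‖ ≤ 1 := by
    intro N x
    rw [norm_div, RCLike.norm_natCast]
    refine div_le_one_of_le₀ ((norm_sum_le _ _).trans ?_) N.cast_nonneg
    simpa using Finset.sum_le_sum fun n (_ : n ∈ Finset.range N) => hg_le n x
  have hdom := tendsto_integral_of_dominated_convergence (fun _ => (1 : ℝ)) (fun N => by fun_prop)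
    (integrable_const 1) (fun N => ae_of_all _ (hmean_le N)) hlim
  rw [integral_zero] at hdom
  exact tendsto_nhds_unique (tendsto_const_nhds.congr' <|
    (eventually_ge_atTop 1).mono fun N hN => (hmean N hN).symm) hdom

/-- If Furstenberg's conjecture fails — i.e. there is an atomless Borel probability
measure `μ` on the circle with `μ̂(2n) = μ̂(3n) = μ̂(n)` for all `n` and `μ ≠ Lebesgue` —
then there is an irrational `x` for which the sequence `(s_n x)` (with `(s_n)`
enumerating the Furstenberg set) is not uniformly distributed mod 1 (Weyl criterion). -/
theorem furstenberg_conjecture_failure_gives_nonnormal_irrational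
    (μ : Measure (AddCircle (1 : ℝ))) [IsProbabilityMeasure μ] [NullSingletonClass μ]
    (hinv : ∀ n : ℤ, (∫ x, fourier (-(2 * n)) x ∂μ) = ∫ x, fourier (-n) x ∂μ ∧
                     (∫ x, fourier (-(3 * n)) x ∂μ) = ∫ x, fourier (-n) x ∂μ)
    (hne : μ ≠ volume) :
    ∃ x : ℝ, Irrational x ∧
      ¬ (∀ h : ℤ, h ≠ 0 →
        Tendsto (fun N : ℕ =>
            (∑ n ∈ Finset.range N,
              Complex.exp (2 * Real.pi * Complex.I * (h : ℂ) *
                ((Nat.nth (fun m : ℕ => ∃ j k : ℕ, m = 2 ^ j * 3 ^ k) n : ℂ)) * (x : ℂ))) /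
            (N : ℂ))
          atTop (nhds 0)) := by
  have : Fact ((0 : ℝ) < 1) := ⟨one_pos⟩
  obtain ⟨h, hh, hμh⟩ : ∃ h : ℤ, h ≠ 0 ∧ ∫ x, fourier h x ∂μ ≠ 0 := by
    by_contra! hc
    refine hne ((AddCircle.eq_haarAddCircle_of_integral_fourier_eq_zero hc).trans ?_)
    simp [AddCircle.volume_eq_smul_haarAddCircle]
  set S : ℕ → Prop := fun m => ∃ j k : ℕ, m = 2 ^ j * 3 ^ k
  have hS : (Set.ofPred S).Infinite := Set.infinite_of_injective_forall_mem
    (Nat.pow_right_injective le_rfl) fun j => ⟨j, 0, by ring⟩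
  have hμS : ∀ n, ∫ x, fourier (Nat.nth S n * h) x ∂μ = ∫ x, fourier h x ∂μ := by
    intro n
    obtain ⟨j, k, hjk⟩ := Nat.nth_mem_of_infinite hS n
    have h2 := pow_mul_apply_eq (f := fun n : ℤ => ∫ x, fourier (-n) x ∂μ) fun n => (hinv n).1
    have h3 := pow_mul_apply_eq (f := fun n : ℤ => ∫ x, fourier (-n) x ∂μ) fun n => (hinv n).2
    have hs : (Nat.nth S n : ℤ) * h = -(2 ^ j * (3 ^ k * -h)) := by rw [hjk]; push_cast; ring
    rw [hs, h2, h3, neg_neg]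
  by_contra! hweyl
  refine hμh (eq_zero_of_integral_eq_of_ae_tendsto_cesaro (fun n => ?_) (fun n x => ?_) hμS ?_)
  · exact (fourier _).continuous.aestronglyMeasurable
  · exact (Circle.norm_coe _).le
  filter_upwards [AddCircle.ae_irrational_of_coe_eq μ] with y hy
  obtain ⟨x, rfl⟩ := QuotientAddGroup.mk_surjective y
  convert hweyl x (hy x rfl) h hh using 4 with N n
  rw [fourier_coe_apply]
  push_cast
  ring_nf
end

section
/- Let E = (n_k) ⊂ ℤ be a Ka-set, i.e. there exists a continuous probability measure μ on 𝕋 with inf_k |μ̂(n_k)| > 0. Then the set W(E) of x ∈ 𝕋 for which (n_k x) is not uniformly distributed mod 1 is uncountable. -/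
/-!
If `W(E)` were countable, then for every finite measure `ν` without atoms the Weyl averages
`(1/N) ∑_{k<N} e(-n_k z)` would tend to `0` for `ν`-a.e. `z`, so by dominated convergence
`(1/N) ∑_{k<N} ν̂(n_k) → 0`. Take for `ν = μ ∗ μ̃` the law of `x - y` with `x, y` independent of
law `μ`: it has no atoms and `ν̂(n_k) = |μ̂(n_k)|² ≥ δ²`, a contradiction.
-/

open MeasureTheory Filter Finset ComplexConjugate

section Difference

variable {G : Type*} [AddGroup G] [MeasurableSpace G] [MeasurableSub₂ G]
  [MeasurableSingletonClass G]

lemma nullSingletonClass_map_sub_prod (μ ν : Measure G) [SFinite ν] [NullSingletonClass ν] :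
    NullSingletonClass ((μ.prod ν).map fun p => p.1 - p.2) where
  measure_singleton a := by
    rw [Measure.map_apply measurable_sub (measurableSet_singleton a),
      Measure.prod_apply (measurable_sub (measurableSet_singleton a))]
    have hslice (z : G) : Prod.mk z ⁻¹' ((fun p : G × G => p.1 - p.2) ⁻¹' {a}) = {-a + z} := by
      ext w
      simp only [Set.mem_preimage, Set.mem_singleton_iff]
      rw [sub_eq_iff_eq_add, eq_neg_add_iff_add_eq, eq_comm]
    simp [hslice]

end Difference

section Circle

variable {T : ℝ}

lemma fourier_sub (n : ℤ) (x y : AddCircle T) :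
    fourier n (x - y) = fourier n x * conj (fourier n y) := by
  rw [sub_eq_add_neg, fourier_apply, smul_add, AddCircle.toCircle_add, Circle.coe_mul,
    smul_neg, fourier_neg']
  rfl

lemma integral_fourier_map_sub_prod (μ : Measure (AddCircle T)) [IsFiniteMeasure μ] (n : ℤ) :
    ∫ z, fourier n z ∂((μ.prod μ).map fun p => p.1 - p.2) =
      (‖∫ z, fourier n z ∂μ‖ : ℂ) ^ 2 := by
  rw [integral_map (by fun_prop) (fourier n).continuous.aestronglyMeasurable]
  simp_rw [fourier_sub]
  rw [integral_prod_mul (fun x => fourier n x) (fun y => conj (fourier n y)), integral_conj,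
    Complex.mul_conj']

lemma norm_fourier (n : ℤ) (x : AddCircle T) : ‖fourier n x‖ = 1 := Circle.norm_coe _

lemma integrable_fourier (ν : Measure (AddCircle T)) [IsFiniteMeasure ν] (n : ℤ) :
    Integrable (fourier n) ν :=
  .of_bound (fourier n).continuous.aestronglyMeasurable 1
    (ae_of_all _ fun x => (norm_fourier n x).le)

noncomputable def fourierAverage (n : ℕ → ℤ) (N : ℕ) (z : AddCircle T) : ℂ :=
  (∑ k ∈ range N, fourier (n k) z) / N

lemma continuous_fourierAverage (n : ℕ → ℤ) (N : ℕ) :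
    Continuous (fourierAverage (T := T) n N) := by
  unfold fourierAverage
  fun_prop

lemma norm_fourierAverage_le_one (n : ℕ → ℤ) (N : ℕ) (z : AddCircle T) :
    ‖fourierAverage n N z‖ ≤ 1 := by
  rcases N.eq_zero_or_pos with rfl | hN
  · simp [fourierAverage]
  rw [fourierAverage, norm_div, Complex.norm_natCast, div_le_one (by exact_mod_cast hN)]
  calc ‖∑ k ∈ range N, fourier (n k) z‖ ≤ ∑ k ∈ range N, ‖fourier (n k) z‖ := norm_sum_le _ _
    _ = N := by simp only [norm_fourier, sum_const, card_range, nsmul_eq_mul, mul_one]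

lemma integral_fourierAverage (ν : Measure (AddCircle T)) [IsFiniteMeasure ν] (n : ℕ → ℤ)
    (N : ℕ) : ∫ z, fourierAverage n N z ∂ν = (∑ k ∈ range N, ∫ z, fourier (n k) z ∂ν) / N := by
  rw [← integral_finsetSum _ fun k _ => integrable_fourier ν (n k), ← integral_div]
  rfl

theorem tendsto_integral_fourierAverage_of_countable (ν : Measure (AddCircle T))
    [IsFiniteMeasure ν] [NullSingletonClass ν] (n : ℕ → ℤ)
    (hW : {z : AddCircle T | ¬ Tendsto (fun N => fourierAverage n N z) atTop (nhds 0)}.Countable) :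
    Tendsto (fun N => ∫ z, fourierAverage n N z ∂ν) atTop (nhds 0) := by
  have hae : ∀ᵐ z ∂ν, Tendsto (fun N => fourierAverage n N z) atTop (nhds 0) :=
    ae_iff.mpr (hW.measure_zero ν)
  simpa using tendsto_integral_of_dominated_convergence (fun _ => 1)
    (fun N => (continuous_fourierAverage n N).aestronglyMeasurable) (integrable_const 1)
    (fun N => ae_of_all _ (norm_fourierAverage_le_one n N)) hae

end Circle

lemma fourierAverage_coe (h : ℤ) (E : ℕ → ℤ) (N : ℕ) (x : ℝ) :
    fourierAverage (fun k => h * E k) N (x : AddCircle (1 : ℝ)) =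
      (∑ k ∈ range N, Complex.exp (2 * Real.pi * Complex.I * h * E k * x)) / N := by
  simp only [fourierAverage, fourier_coe_apply]
  congr 1
  refine sum_congr rfl fun k _ => ?_
  push_cast
  ring_nf

lemma not_tendsto_average_zero_of_le {c : ℕ → ℝ} {δ : ℝ} (hδ : 0 < δ) (hc : ∀ k, δ ≤ c k) :
    ¬ Tendsto (fun N : ℕ => (∑ k ∈ range N, c k) / N) atTop (nhds 0) := by
  intro hlim
  have hev : ∀ᶠ N : ℕ in atTop, δ ≤ (∑ k ∈ range N, c k) / N := by
    filter_upwards [eventually_gt_atTop 0] with N hN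
    rw [le_div_iff₀ (by exact_mod_cast hN)]
    simpa [mul_comm] using card_nsmul_le_sum (range N) c δ fun k _ => hc k
  exact hδ.not_ge (ge_of_tendsto hlim hev)

/-- If `E = (n_k)` is a Ka-set (there is a continuous probability measure `μ` on the
circle with `inf_k |μ̂(n_k)| > 0`), then the set `W(E)` of `x` for which `(n_k x)` is
not uniformly distributed mod 1 is uncountable. -/
theorem Ka_set_nonnormal_uncountable (E : ℕ → ℤ)
    (μ : Measure (AddCircle (1 : ℝ))) [IsProbabilityMeasure μ] [NullSingletonClass μ]
    (δ : ℝ) (hδ : 0 < δ)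
    (hKa : ∀ k : ℕ, δ ≤ ‖∫ x, fourier (-(E k)) x ∂μ‖) :
    ¬ Set.Countable {x : ℝ |
      ¬ (∀ h : ℤ, h ≠ 0 →
        Tendsto (fun N : ℕ =>
            (∑ k ∈ Finset.range N,
              Complex.exp (2 * Real.pi * Complex.I * (h : ℂ) * (E k : ℂ) * (x : ℂ))) /
            (N : ℂ))
          atTop (nhds 0))} := by
  intro hW
  set n : ℕ → ℤ := fun k => -1 * E k
  have hcount : Set.Countable
      {z : AddCircle (1 : ℝ) | ¬ Tendsto (fun N => fourierAverage n N z) atTop (nhds 0)} := by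
    refine (hW.image ((↑) : ℝ → AddCircle (1 : ℝ))).mono fun z hz => ?_
    obtain ⟨x, rfl⟩ := QuotientAddGroup.mk_surjective z
    refine ⟨x, fun hx => hz ?_, rfl⟩
    simpa only [n, fourierAverage_coe] using hx (-1) (by norm_num)
  have := nullSingletonClass_map_sub_prod μ μ
  have hlim := tendsto_integral_fourierAverage_of_countable
    ((μ.prod μ).map fun p => p.1 - p.2) n hcount
  simp only [integral_fourierAverage, integral_fourier_map_sub_prod, n, neg_one_mul] at hlim
  refine not_tendsto_average_zero_of_le (pow_pos hδ 2) (fun k => pow_le_pow_left₀ hδ.le (hKa k) 2)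
    (tendsto_ofReal_iff.mp ?_)
  push_cast
  exact hlim
end

section
/- (Generalized Birkhoff averaging lemma) Let (X, 𝔅, μ, T) be a measure-preserving dynamical system and (f_n) a sequence of integrable functions with: (1) f_n → 0 μ-a.e. and ‖f_n‖₁ → 0; (2) sup_n |f_n| is integrable. Then (1/N) Σ_{n=0}^{N−1} f_n(T^{N−n} x) → 0 for μ-almost every x. -/
/-!
Dominate `|f n|` for `n ≥ k` by the tail supremum `F k = ⨆ m, |f (k + m)|`. By dominated
convergence `∫ F k → 0`, so the maximal ergodic inequality shows that, almost surely, for every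
`ε > 0` some `k` has all Birkhoff sums `S_J (F k) x ≤ ε J`; the terms `n ≥ k` of the reversed sum
are bounded by `S_{N+1} (F k) x`. The finitely many terms `n < k` are bounded by
`F 0 (T^[N - n] x)`, and `F 0 ∘ T^[j] = o(j)` almost surely by Borel–Cantelli, since
`∑ μ {F 0 > ε j} < ∞` for the integrable `F 0`.
-/

open MeasureTheory Filter Finset Asymptotics Topology

section BirkhoffSum

variable {X : Type*} {T : X → X} {g : X → ℝ}

theorem partialSups_birkhoffSum_nonneg (T : X → X) (g : X → ℝ) (n : ℕ) (x : X) :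
    0 ≤ partialSups (birkhoffSum T g) n x := by
  simpa using le_partialSups_of_le (birkhoffSum T g) (Nat.zero_le n) x

theorem partialSups_birkhoffSum_le_add_comp {n : ℕ} {x : X}
    (hpos : 0 < partialSups (birkhoffSum T g) n x) :
    partialSups (birkhoffSum T g) n x ≤ g x + partialSups (birkhoffSum T g) n (T x) := by
  rw [Pi.partialSups_apply] at hpos ⊢
  obtain ⟨j, hjn, hj⟩ := exists_partialSups_eq (fun j => birkhoffSum T g j x) n
  rw [hj] at hpos ⊢
  obtain _ | i := j
  · simp at hpos
  rw [birkhoffSum_succ', Pi.partialSups_apply]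
  gcongr
  exact le_partialSups_of_le (fun j => birkhoffSum T g j (T x)) (by omega)

variable [MeasurableSpace X] {μ : Measure X}

theorem measurable_partialSups_birkhoffSum (hT : Measurable T) (hg : Measurable g) (n : ℕ) :
    Measurable (partialSups (birkhoffSum T g) n) := by
  rw [partialSups_apply]
  refine Finset.sup'_induction _ _ (fun _ h₁ _ h₂ => h₁.sup h₂) fun j _ => ?_
  exact Finset.measurable_sum _ fun i _ => hg.comp (hT.iterate i)

theorem integrable_birkhoffSum (hT : MeasurePreserving T μ μ) (hg : Integrable g μ) (n : ℕ) :
    Integrable (birkhoffSum T g n) μ :=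
  integrable_finsetSum _ fun i _ => (hT.iterate i).integrable_comp_of_integrable hg

theorem integrable_partialSups_birkhoffSum (hT : MeasurePreserving T μ μ) (hg : Integrable g μ)
    (n : ℕ) : Integrable (partialSups (birkhoffSum T g) n) μ := by
  rw [partialSups_apply]
  exact Finset.sup'_induction (p := (Integrable · μ)) _ _ (fun _ h₁ _ h₂ => h₁.sup h₂)
    fun j _ => integrable_birkhoffSum hT hg j

/-- Garsia's form of the maximal ergodic lemma. -/
theorem setIntegral_partialSups_birkhoffSum_pos_nonneg (hT : MeasurePreserving T μ μ)
    (hgm : Measurable g) (hg : Integrable g μ) (n : ℕ) :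
    0 ≤ ∫ x in {x | 0 < partialSups (birkhoffSum T g) n x}, g x ∂μ := by
  set M := partialSups (birkhoffSum T g) n
  set A := {x | 0 < M x}
  have hA : MeasurableSet A :=
    measurableSet_lt measurable_const (measurable_partialSups_birkhoffSum hT.measurable hgm n)
  have hM : Integrable M μ := integrable_partialSups_birkhoffSum hT hg n
  have hMT : Integrable (M ∘ T) μ := hT.integrable_comp_of_integrable hM
  have hM0 : ∀ x, 0 ≤ M x := partialSups_birkhoffSum_nonneg T g n
  have hMT_eq : ∫ x, M (T x) ∂μ = ∫ x, M x ∂μ := by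
    rw [← integral_map hT.aemeasurable (by rw [hT.map_eq]; exact hM.aestronglyMeasurable),
      hT.map_eq]
  calc 0 = ∫ x, M x ∂μ - ∫ x, M (T x) ∂μ := by rw [hMT_eq, sub_self]
    _ ≤ ∫ x in A, M x ∂μ - ∫ x in A, M (T x) ∂μ := by
      rw [setIntegral_eq_integral_of_forall_compl_eq_zero (s := A) (f := M) fun x hx =>
        le_antisymm (not_lt.1 hx) (hM0 x)]
      exact sub_le_sub_left
        (setIntegral_le_integral hMT (Eventually.of_forall fun x => hM0 (T x))) _
    _ = ∫ x in A, (M x - M (T x)) ∂μ := (integral_sub hM.integrableOn hMT.integrableOn).symm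
    _ ≤ ∫ x in A, g x ∂μ := setIntegral_mono_on (hM.sub hMT).integrableOn hg.integrableOn hA
      fun x hx => by linarith [partialSups_birkhoffSum_le_add_comp (T := T) hx]

theorem mul_measureReal_partialSups_birkhoffSum_sub_pos_le [IsFiniteMeasure μ]
    (hT : MeasurePreserving T μ μ) (hgm : Measurable g) (hg : Integrable g μ) (ε : ℝ) (n : ℕ) :
    ε * μ.real {x | 0 < partialSups (birkhoffSum T (fun y => g y - ε)) n x} ≤
      ∫ x, |g x| ∂μ := by
  set A := {x | 0 < partialSups (birkhoffSum T (fun y => g y - ε)) n x}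
  have hgarsia := setIntegral_partialSups_birkhoffSum_pos_nonneg hT (hgm.sub_const ε)
    (hg.sub (integrable_const ε)) n
  rw [integral_sub hg.integrableOn (integrable_const ε).integrableOn, setIntegral_const,
    smul_eq_mul] at hgarsia
  calc ε * μ.real A ≤ ∫ x in A, g x ∂μ := by linarith
    _ ≤ ∫ x in A, |g x| ∂μ :=
      setIntegral_mono hg.integrableOn hg.abs.integrableOn fun x => le_abs_self _
    _ ≤ ∫ x, |g x| ∂μ :=
      setIntegral_le_integral hg.abs (Eventually.of_forall fun x => abs_nonneg _)

theorem measure_exists_birkhoffSum_gt_le [IsFiniteMeasure μ] (hT : MeasurePreserving T μ μ)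
    (hg : Integrable g μ) {ε : ℝ} (hε : 0 < ε) :
    μ {x | ∃ j : ℕ, ε * j < birkhoffSum T g j x} ≤ ENNReal.ofReal ((∫ x, |g x| ∂μ) / ε) := by
  set g' := hg.aestronglyMeasurable.mk g
  have hgg' : g =ᵐ[μ] g' := hg.aestronglyMeasurable.ae_eq_mk
  have hg'm : Measurable g' := hg.aestronglyMeasurable.stronglyMeasurable_mk.measurable
  have hg' : Integrable g' μ := hg.congr hgg'
  have hsum : ∀ᵐ x ∂μ, ∀ j, birkhoffSum T g j x = birkhoffSum T g' j x :=
    ae_all_iff.2 fun j => hT.quasiMeasurePreserving.birkhoffSum_ae_eq_of_ae_eq hgg' j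
  set S := birkhoffSum T (fun y => g' y - ε)
  set E : ℕ → Set X := fun n => {x | 0 < partialSups S n x}
  have hE : Monotone E := fun m n hmn x hx => hx.trans_le ((partialSups S).monotone hmn x)
  have hsub : {x | ∃ j : ℕ, ε * j < birkhoffSum T g j x} ≤ᵐ[μ] ⋃ n, E n := by
    filter_upwards [hsum] with x hx ⟨j, hj⟩
    refine Set.mem_iUnion.2 ⟨j, lt_of_lt_of_le ?_ (le_partialSups S j x)⟩
    have : S j x = birkhoffSum T g' j x - j * ε := by
      simp [S, birkhoffSum, Finset.sum_sub_distrib]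
    rw [this, ← hx j]
    linarith
  have habs : ∫ x, |g' x| ∂μ = ∫ x, |g x| ∂μ :=
    integral_congr_ae (hgg'.symm.fun_comp abs)
  calc μ {x | ∃ j : ℕ, ε * j < birkhoffSum T g j x} ≤ μ (⋃ n, E n) := measure_mono_ae hsub
    _ = ⨆ n, μ (E n) := hE.measure_iUnion
    _ ≤ ENNReal.ofReal ((∫ x, |g x| ∂μ) / ε) := iSup_le fun n => by
      rw [← ofReal_measureReal, ← habs]
      refine ENNReal.ofReal_le_ofReal ((le_div_iff₀' hε).2 ?_)
      exact mul_measureReal_partialSups_birkhoffSum_sub_pos_le hT hg'm hg' ε n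

theorem ae_forall_pos_of_mono {p : X → ℝ → Prop} (hp : ∀ x ε δ, ε ≤ δ → p x ε → p x δ)
    (h : ∀ ε > 0, ∀ᵐ x ∂μ, p x ε) : ∀ᵐ x ∂μ, ∀ ε > 0, p x ε := by
  have hnat : ∀ᵐ x ∂μ, ∀ m : ℕ, p x (1 / (m + 1)) :=
    ae_all_iff.2 fun m => h _ Nat.one_div_pos_of_nat
  filter_upwards [hnat] with x hx ε hε
  obtain ⟨m, hm⟩ := exists_nat_one_div_lt hε
  exact hp x _ _ hm.le (hx m)

theorem ae_forall_pos_exists_birkhoffSum_le [IsFiniteMeasure μ] (hT : MeasurePreserving T μ μ)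
    {g : ℕ → X → ℝ} (hg : ∀ k, Integrable (g k) μ)
    (hlim : Tendsto (fun k => ∫ x, |g k x| ∂μ) atTop (𝓝 0)) :
    ∀ᵐ x ∂μ, ∀ ε > 0, ∃ k, ∀ j : ℕ, birkhoffSum T (g k) j x ≤ ε * j := by
  refine ae_forall_pos_of_mono
    (fun x ε δ hεδ ⟨k, hk⟩ => ⟨k, fun j => (hk j).trans (by gcongr)⟩) fun ε hε => ?_
  set E : ℕ → Set X := fun k => {x | ∃ j : ℕ, ε * j < birkhoffSum T (g k) j x}
  have hbound : Tendsto (fun k => ENNReal.ofReal ((∫ x, |g k x| ∂μ) / ε)) atTop (𝓝 0) := by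
    simpa using ENNReal.tendsto_ofReal (hlim.div_const ε)
  have hnull : μ (⋂ k, E k) = 0 := le_antisymm (ge_of_tendsto' hbound fun k =>
    (measure_mono (Set.iInter_subset E k)).trans (measure_exists_birkhoffSum_gt_le hT (hg k) hε))
    bot_le
  refine measure_mono_null (fun x hx => Set.mem_iInter.2 fun k => ?_) hnull
  simpa [E] using fun h : ∀ j : ℕ, birkhoffSum T (g k) j x ≤ ε * j => hx ⟨k, h⟩

theorem tsum_measure_mul_lt_abs_comp_iterate_ne_top [IsProbabilityMeasure μ]
    (hT : MeasurePreserving T μ μ) (hg : Integrable g μ) {ε : ℝ} (hε : 0 < ε) :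
    ∑' n : ℕ, μ {x | ε * n < |g (T^[n] x)|} ≠ ⊤ := by
  have hpre : ∀ n : ℕ, μ {x | ε * n < |g (T^[n] x)|} = μ {y | ε⁻¹ * |g y| ∈ Set.Ioi (n : ℝ)} := by
    intro n
    have hset : {y | ε⁻¹ * |g y| ∈ Set.Ioi (n : ℝ)} = {y | ε * n < |g y|} := by
      ext y
      simp [lt_inv_mul_iff₀ hε]
    rw [hset]
    exact (hT.iterate n).measure_preimage
      (nullMeasurableSet_lt aemeasurable_const hg.1.aemeasurable.abs)
  simp only [hpre]
  let : MeasureSpace X := ⟨μ⟩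
  exact (ProbabilityTheory.tsum_prob_mem_Ioi_lt_top (hg.abs.const_mul ε⁻¹)
    fun y => by positivity).ne

theorem ae_isLittleO_comp_iterate [IsProbabilityMeasure μ] (hT : MeasurePreserving T μ μ)
    (hg : Integrable g μ) : ∀ᵐ x ∂μ, (fun n : ℕ => g (T^[n] x)) =o[atTop] (fun n => (n : ℝ)) := by
  have hbound : ∀ ε > 0, ∀ᵐ x ∂μ, ∀ᶠ n : ℕ in atTop, ‖g (T^[n] x)‖ ≤ ε * ‖(n : ℝ)‖ :=
    fun ε hε => by
      filter_upwards [ae_eventually_notMem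
        (tsum_measure_mul_lt_abs_comp_iterate_ne_top hT hg hε)] with x hx
      filter_upwards [hx] with n hn
      simpa using not_lt.1 hn
  filter_upwards [ae_forall_pos_of_mono (fun x ε δ hεδ hx => hx.mono fun n hn =>
    hn.trans (mul_le_mul_of_nonneg_right hεδ (norm_nonneg _))) hbound] with x hx
  exact isLittleO_iff.2 hx

end BirkhoffSum

section TailSup

/-- In `ℝ`, `⨆` over an unbounded range is `0`, so the bounds below assume `BddAbove`. -/
noncomputable def tailSupAbs (a : ℕ → ℝ) (k : ℕ) : ℝ := ⨆ n, |a (k + n)|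

variable {a : ℕ → ℝ}

theorem tailSupAbs_nonneg (a : ℕ → ℝ) (k : ℕ) : 0 ≤ tailSupAbs a k :=
  Real.iSup_nonneg fun _ => abs_nonneg _

theorem abs_le_tailSupAbs (ha : BddAbove (Set.range fun n => |a n|)) {k n : ℕ} (hkn : k ≤ n) :
    |a n| ≤ tailSupAbs a k := by
  obtain ⟨m, rfl⟩ := Nat.exists_eq_add_of_le hkn
  exact le_ciSup (ha.mono (Set.range_comp_subset_range (k + ·) fun n => |a n|)) m

theorem tailSupAbs_le_iSup_abs (ha : BddAbove (Set.range fun n => |a n|)) (k : ℕ) :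
    tailSupAbs a k ≤ ⨆ n, |a n| :=
  ciSup_le fun n => le_ciSup ha (k + n)

theorem tendsto_tailSupAbs (ha : Tendsto a atTop (𝓝 0)) :
    Tendsto (tailSupAbs a) atTop (𝓝 0) := by
  rw [Metric.tendsto_atTop] at ha ⊢
  intro ε hε
  obtain ⟨K, hK⟩ := ha (ε / 2) (half_pos hε)
  refine ⟨K, fun k hk => ?_⟩
  have hle : tailSupAbs a k ≤ ε / 2 := ciSup_le fun n => by
    simpa [Real.dist_eq] using (hK (k + n) (by omega)).le
  rw [Real.dist_eq, sub_zero, abs_of_nonneg (tailSupAbs_nonneg a k)]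
  linarith

variable {X : Type*} [MeasurableSpace X] {μ : Measure X} {f : ℕ → X → ℝ}

theorem ae_norm_tailSupAbs_le (hf : ∀ᵐ x ∂μ, Tendsto (fun n => f n x) atTop (𝓝 0)) (k : ℕ) :
    ∀ᵐ x ∂μ, ‖tailSupAbs (fun n => f n x) k‖ ≤ ⨆ n, |f n x| := by
  filter_upwards [hf] with x hx
  rw [Real.norm_eq_abs, abs_of_nonneg (tailSupAbs_nonneg _ k)]
  exact tailSupAbs_le_iSup_abs hx.abs.bddAbove_range k

theorem aestronglyMeasurable_tailSupAbs (hf : ∀ n, AEStronglyMeasurable (f n) μ) (k : ℕ) :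
    AEStronglyMeasurable (fun x => tailSupAbs (fun n => f n x) k) μ :=
  (AEMeasurable.iSup fun n => (hf (k + n)).aemeasurable.abs).aestronglyMeasurable

theorem integrable_tailSupAbs (hf : ∀ n, AEStronglyMeasurable (f n) μ)
    (hlim : ∀ᵐ x ∂μ, Tendsto (fun n => f n x) atTop (𝓝 0))
    (hsup : Integrable (fun x => ⨆ n, |f n x|) μ) (k : ℕ) :
    Integrable (fun x => tailSupAbs (fun n => f n x) k) μ :=
  hsup.mono' (aestronglyMeasurable_tailSupAbs hf k) (ae_norm_tailSupAbs_le hlim k)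

theorem tendsto_integral_tailSupAbs (hf : ∀ n, AEStronglyMeasurable (f n) μ)
    (hlim : ∀ᵐ x ∂μ, Tendsto (fun n => f n x) atTop (𝓝 0))
    (hsup : Integrable (fun x => ⨆ n, |f n x|) μ) :
    Tendsto (fun k => ∫ x, tailSupAbs (fun n => f n x) k ∂μ) atTop (𝓝 0) := by
  simpa using tendsto_integral_of_dominated_convergence _ (aestronglyMeasurable_tailSupAbs hf)
    hsup (ae_norm_tailSupAbs_le hlim) (hlim.mono fun x hx => tendsto_tailSupAbs hx)

end TailSup

section ReversedAverage

theorem tendsto_inv_mul_sum_range_comp_sub {w : ℕ → ℝ} (hw : w =o[atTop] (fun j => (j : ℝ)))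
    (k : ℕ) : Tendsto (fun N : ℕ => 1 / (N : ℝ) * ∑ n ∈ range k, w (N - n)) atTop (𝓝 0) := by
  have hterm : ∀ n, Tendsto (fun N : ℕ => 1 / (N : ℝ) * w (N - n)) atTop (𝓝 0) := fun n => by
    have hshift : (fun N : ℕ => w (N - n)) =o[atTop] (fun N : ℕ => (N : ℝ)) :=
      (hw.comp_tendsto (tendsto_sub_atTop_nat n)).trans_isBigO
        (IsBigO.of_bound 1 (Eventually.of_forall fun N => by simp))
    simpa only [one_div_mul_eq_div] using hshift.tendsto_div_nhds_zero
  simpa [Finset.mul_sum] using tendsto_finsetSum (range k) fun n _ => hterm n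

theorem sum_range_comp_sub_le_sum_range_succ {w : ℕ → ℝ} (hw : ∀ j, 0 ≤ w j) (N : ℕ) :
    ∑ n ∈ range N, w (N - n) ≤ ∑ j ∈ range (N + 1), w j :=
  calc ∑ n ∈ range N, w (N - n) ≤ ∑ n ∈ range (N + 1), w (N - n) :=
        sum_le_sum_of_subset_of_nonneg (range_mono N.le_succ) fun _ _ _ => hw _
    _ = ∑ j ∈ range (N + 1), w j := by simpa using sum_range_reflect w (N + 1)

theorem tendsto_inv_mul_sum_range_reversed {u v : ℕ → ℕ → ℝ}
    (hbound : ∀ k n j, k ≤ n → |u n j| ≤ v k j) (hv0 : v 0 =o[atTop] (fun j => (j : ℝ)))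
    (hv : ∀ ε > 0, ∃ k, ∀ J : ℕ, ∑ j ∈ range J, v k j ≤ ε * J) :
    Tendsto (fun N : ℕ => 1 / (N : ℝ) * ∑ n ∈ range N, u n (N - n)) atTop (𝓝 0) := by
  have hv_nonneg : ∀ k j, 0 ≤ v k j := fun k j => (abs_nonneg _).trans (hbound k k j le_rfl)
  rw [NormedAddGroup.tendsto_nhds_zero]
  intro ε hε
  obtain ⟨k, hk⟩ := hv (ε / 4) (by positivity)
  filter_upwards [(tendsto_inv_mul_sum_range_comp_sub hv0 k).eventually
    (gt_mem_nhds (half_pos hε)), eventually_ge_atTop (max k 1)] with N hhead hN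
  have hkN : k ≤ N := le_of_max_le_left hN
  have hN1 : (1 : ℝ) ≤ N := by exact_mod_cast le_of_max_le_right hN
  have hsplit : |∑ n ∈ range N, u n (N - n)| ≤
      ∑ n ∈ range k, v 0 (N - n) + ∑ n ∈ range N, v k (N - n) := by
    calc |∑ n ∈ range N, u n (N - n)| ≤ ∑ n ∈ range N, |u n (N - n)| := abs_sum_le_sum_abs _ _
      _ = ∑ n ∈ range k, |u n (N - n)| + ∑ n ∈ Ico k N, |u n (N - n)| :=
        (sum_range_add_sum_Ico _ hkN).symm
      _ ≤ ∑ n ∈ range k, v 0 (N - n) + ∑ n ∈ Ico k N, v k (N - n) := by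
        gcongr with n hn n hn
        · exact hbound 0 n _ n.zero_le
        · exact hbound k n _ (mem_Ico.1 hn).1
      _ ≤ ∑ n ∈ range k, v 0 (N - n) + ∑ n ∈ range N, v k (N - n) :=
        add_le_add_right (sum_le_sum_of_subset_of_nonneg
          (fun n hn => mem_range.2 (mem_Ico.1 hn).2) fun _ _ _ => hv_nonneg _ _) _
  have htail : ∑ n ∈ range N, v k (N - n) ≤ ε / 2 * N :=
    calc ∑ n ∈ range N, v k (N - n) ≤ ∑ j ∈ range (N + 1), v k j :=
          sum_range_comp_sub_le_sum_range_succ (hv_nonneg k) N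
      _ ≤ ε / 4 * (N + 1 : ℕ) := hk (N + 1)
      _ ≤ ε / 2 * N := by push_cast; nlinarith
  have hNpos : (0 : ℝ) < N := by linarith
  rw [Real.norm_eq_abs, abs_mul, abs_of_pos (one_div_pos.2 hNpos)]
  calc 1 / (N : ℝ) * |∑ n ∈ range N, u n (N - n)|
      ≤ 1 / N * ∑ n ∈ range k, v 0 (N - n) + 1 / N * ∑ n ∈ range N, v k (N - n) := by
        rw [← mul_add]; gcongr
    _ < ε / 2 + ε / 2 := by
        refine add_lt_add_of_lt_of_le hhead ?_
        rw [one_div_mul_eq_div, div_le_iff₀ hNpos]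
        exact htail
    _ = ε := add_halves ε

end ReversedAverage

theorem generalized_birkhoff_general {X : Type*} [MeasurableSpace X]
    (μ : Measure X) [IsProbabilityMeasure μ] (T : X → X)
    (hT : MeasurePreserving T μ μ) (f : ℕ → X → ℝ)
    (hint : ∀ n, Integrable (f n) μ)
    (hae : ∀ᵐ x ∂μ, Tendsto (fun n => f n x) atTop (nhds 0))
    (hsup : Integrable (fun x => ⨆ n, |f n x|) μ) :
    ∀ᵐ x ∂μ, Tendsto (fun N : ℕ =>
        (1 / (N : ℝ)) * ∑ n ∈ Finset.range N, f n (T^[N - n] x))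
      atTop (nhds 0) := by
  set F : ℕ → X → ℝ := fun k x => tailSupAbs (fun n => f n x) k
  have hfm : ∀ n, AEStronglyMeasurable (f n) μ := fun n => (hint n).1
  have hF : ∀ k, Integrable (F k) μ := integrable_tailSupAbs hfm hae hsup
  have hFlim : Tendsto (fun k => ∫ x, |F k x| ∂μ) atTop (𝓝 0) := by
    simpa only [F, abs_of_nonneg (tailSupAbs_nonneg _ _)] using
      tendsto_integral_tailSupAbs hfm hae hsup
  have horbit : ∀ᵐ x ∂μ, ∀ j, Tendsto (fun n => f n (T^[j] x)) atTop (𝓝 0) :=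
    ae_all_iff.2 fun j => (hT.iterate j).quasiMeasurePreserving.ae hae
  filter_upwards [horbit, ae_forall_pos_exists_birkhoffSum_le hT hF hFlim,
    ae_isLittleO_comp_iterate hT (hF 0)] with x hx hmax hF0
  exact tendsto_inv_mul_sum_range_reversed (u := fun n j => f n (T^[j] x))
    (v := fun k j => F k (T^[j] x))
    (fun k n j hkn => abs_le_tailSupAbs (hx j).abs.bddAbove_range hkn) hF0 hmax

/-- Generalized Birkhoff averaging lemma: if `f_n → 0` a.e., `‖f_n‖₁ → 0` and
`sup_n |f_n|` is integrable, then `(1/N) Σ_{n<N} f_n(T^{N-n} x) → 0` a.e. -/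
theorem generalized_birkhoff {X : Type*} [MeasurableSpace X]
    (μ : Measure X) [IsProbabilityMeasure μ] (T : X → X)
    (hT : MeasurePreserving T μ μ) (f : ℕ → X → ℝ)
    (hint : ∀ n, Integrable (f n) μ)
    (hae : ∀ᵐ x ∂μ, Tendsto (fun n => f n x) atTop (nhds 0))
    (hL1 : Tendsto (fun n => ∫ x, |f n x| ∂μ) atTop (nhds 0))
    (hsup : Integrable (fun x => ⨆ n, |f n x|) μ) :
    ∀ᵐ x ∂μ, Tendsto (fun N : ℕ =>
        (1 / (N : ℝ)) * ∑ n ∈ Finset.range N, f n (T^[N - n] x))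
      atTop (nhds 0) :=
  generalized_birkhoff_general μ T hT f hint hae hsup
end

section
/- (Davenport–Erdős–LeVeque criterion) Let (Ω, 𝒜, μ) be a probability space and (X_n) complex-valued random variables with |X_n| ≤ 1. Set Z_n = (1/n) Σ_{j=1}^n X_j. If Σ_{n=1}^∞ (1/n) ∫ |Z_n|² dμ < ∞, then Z_n → 0 μ-almost everywhere. -/
/-!
Cesàro means of a sequence bounded by `1` vary slowly: `‖Z m - Z n‖ ≤ 2 (m - n) / n` for
`n ≤ m`. Hence if `‖Z m‖ ≥ ε`, then `‖Z n‖ ≥ ε / 2` on a whole window `m ≤ n < m + j` with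
`j ≈ ε m / 4`, and the contribution of this window to `∑ ‖Z n‖² / n` is bounded below by a
constant depending only on `ε`. The hypothesis makes `∑ ‖Z n ω‖² / n` finite for almost
every `ω`, so its tails tend to zero and `‖Z m ω‖ ≥ ε` can happen only finitely often.
-/

open MeasureTheory Filter Finset Topology

lemma norm_sum_le_card_mul {ι E : Type*} [SeminormedAddCommGroup E] {x : ι → E} {M : ℝ}
    (hx : ∀ j, ‖x j‖ ≤ M) (s : Finset ι) : ‖∑ j ∈ s, x j‖ ≤ #s * M := by
  simpa using norm_sum_le_of_le s fun j _ => hx j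

section Cesaro

variable {𝕜 : Type*} [RCLike 𝕜]

def cesaroMean (x : ℕ → 𝕜) (n : ℕ) : 𝕜 := (1 / (n : 𝕜)) * ∑ j ∈ Icc 1 n, x j

variable {x : ℕ → 𝕜} {M : ℝ}

lemma cesaroMean_sub_cesaroMean {n m : ℕ} (hnm : n ≤ m) :
    cesaroMean x m - cesaroMean x n =
      (1 / (m : 𝕜)) * ∑ j ∈ Ioc n m, x j + (1 / (m : 𝕜) - 1 / n) * ∑ j ∈ Icc 1 n, x j := by
  have hIcc (t : ℕ) : Icc 1 t = Ioc 0 t := by ext; simp; omega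
  rw [cesaroMean, cesaroMean, hIcc, hIcc, ← sum_Ioc_consecutive _ n.zero_le hnm]
  ring

lemma norm_cesaroMean_sub_le (hx : ∀ j, ‖x j‖ ≤ M) {n m : ℕ} (hn : 0 < n) (hnm : n ≤ m) :
    ‖cesaroMean x m - cesaroMean x n‖ ≤ 2 * M * (m - n) / n := by
  have hnR : (0 : ℝ) < n := by exact_mod_cast hn
  have hnmR : (n : ℝ) ≤ m := by exact_mod_cast hnm
  have hmR : (0 : ℝ) < m := hnR.trans_le hnmR
  have hM : 0 ≤ M := (norm_nonneg _).trans (hx 0)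
  have hcoef : ‖1 / (m : 𝕜) - 1 / n‖ = 1 / n - 1 / m := by
    rw [← norm_neg, neg_sub, show (1 / (n : 𝕜) - 1 / m) = ((1 / n - 1 / m : ℝ) : 𝕜) by simp,
      RCLike.norm_ofReal, abs_of_nonneg (sub_nonneg.2 (one_div_le_one_div_of_le hnR hnmR))]
  have htail : ‖∑ j ∈ Ioc n m, x j‖ ≤ (m - n) * M := by
    simpa [Nat.cast_sub hnm] using norm_sum_le_card_mul hx (Ioc n m)
  have hhead : ‖∑ j ∈ Icc 1 n, x j‖ ≤ n * M := by
    simpa using norm_sum_le_card_mul hx (Icc 1 n)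
  rw [cesaroMean_sub_cesaroMean hnm]
  calc _ ≤ 1 / m * ((m - n) * M) + (1 / n - 1 / m) * (n * M) := by
        refine (norm_add_le _ _).trans (add_le_add ?_ ?_) <;> rw [norm_mul]
        · simp only [one_div, norm_inv, RCLike.norm_natCast]; gcongr
        · rw [hcoef]; gcongr; exact sub_nonneg.2 (one_div_le_one_div_of_le hnR hnmR)
    _ = 2 * M * (m - n) / m := by field_simp; ring
    _ ≤ 2 * M * (m - n) / n := by gcongr

lemma norm_cesaroMean_le (hx : ∀ j, ‖x j‖ ≤ M) (n : ℕ) : ‖cesaroMean x n‖ ≤ M := by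
  rcases n.eq_zero_or_pos with rfl | hn
  · simpa [cesaroMean] using (norm_nonneg _).trans (hx 0)
  have hnR : (0 : ℝ) < n := by exact_mod_cast hn
  calc ‖cesaroMean x n‖ = ‖∑ j ∈ Icc 1 n, x j‖ / n := by
        simp [cesaroMean, div_eq_inv_mul]
    _ ≤ #(Icc 1 n) * M / n := by gcongr; exact norm_sum_le_card_mul hx _
    _ = M := by simp [Nat.card_Icc]; field_simp

end Cesaro

section SlowlyVarying

variable {E : Type*} [SeminormedAddCommGroup E] {z : ℕ → E} {C : ℝ}

lemma le_sum_Ico_norm_sq_div (hz : ∀ n m : ℕ, 0 < n → n ≤ m → ‖z m - z n‖ ≤ C * (m - n) / n)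
    {ε : ℝ} (hε : 0 ≤ ε) {m j : ℕ} (hm : 0 < m) (hzm : ε ≤ ‖z m‖) (hj : C * j ≤ ε / 2 * m) :
    (ε / 2) ^ 2 * j / (m + j) ≤ ∑ n ∈ Ico m (m + j), ‖z n‖ ^ 2 / n := by
  have hmR : (0 : ℝ) < m := by exact_mod_cast hm
  have hterm : ∀ n ∈ Ico m (m + j), (ε / 2) ^ 2 / (m + j) ≤ ‖z n‖ ^ 2 / n := by
    intro n hn
    obtain ⟨hmn, hnj⟩ := mem_Ico.1 hn
    have hmnR : (m : ℝ) ≤ n := by exact_mod_cast hmn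
    have hnjR : (n : ℝ) ≤ m + j := by exact_mod_cast hnj.le
    have hdrift : ‖z n - z m‖ ≤ ε / 2 := calc
      ‖z n - z m‖ ≤ C * (n - m) / m := hz m n hm hmn
      _ ≤ C * j / m := by
        have hC : 0 ≤ C := by simpa using (norm_nonneg _).trans (hz 1 2 one_pos one_le_two)
        gcongr; linarith
      _ ≤ ε / 2 := by rwa [div_le_iff₀ hmR]
    have hzn : ε / 2 ≤ ‖z n‖ := by
      linarith [norm_sub_norm_le (z m) (z n), norm_sub_rev (z n) (z m)]
    gcongr
    exact hmR.trans_le hmnR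
  calc (ε / 2) ^ 2 * j / (m + j) = #(Ico m (m + j)) • ((ε / 2) ^ 2 / (m + j)) := by
        simp [nsmul_eq_mul]; ring
    _ ≤ _ := card_nsmul_le_sum _ _ _ hterm

theorem tendsto_zero_of_summable_norm_sq_div
    (hz : ∀ n m : ℕ, 0 < n → n ≤ m → ‖z m - z n‖ ≤ C * (m - n) / n)
    (hsum : Summable fun n : ℕ => ‖z n‖ ^ 2 / n) : Tendsto z atTop (𝓝 0) := by
  refine NormedAddGroup.tendsto_nhds_zero.2 fun ε hε => ?_
  obtain ⟨k, hk⟩ := exists_nat_ge (C / (ε / 2))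
  set K := k + 1
  have hCK : C ≤ ε / 2 * K := by
    rw [div_le_iff₀ (by positivity)] at hk; push_cast [K]; nlinarith
  -- A window of length `j = m / K` after a large `‖z m‖` keeps the drift `C j / m` below `ε / 2`
  -- while `j / (m + j) ≥ 1 / (2K + 1)`, so it contributes at least `η` to the series.
  set η := (ε / 2) ^ 2 / (2 * K + 1)
  obtain ⟨s, hs⟩ := summable_iff_vanishing.1 hsum (Set.Iio η) (Iio_mem_nhds (by positivity))
  obtain ⟨N, hN⟩ := s.exists_nat_subset_range
  refine eventually_atTop.2 ⟨max N K, fun m hm => ?_⟩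
  by_contra! hzm
  set j := m / K
  have hKj : K * j ≤ m := by rw [mul_comm]; exact Nat.div_mul_le_self m K
  have hmj : m < K * (j + 1) := Nat.lt_mul_div_succ m (Nat.succ_pos k)
  have hj : 1 ≤ j := (Nat.one_le_div_iff (Nat.succ_pos k)).2 (le_of_max_le_right hm)
  have hKjR : (K : ℝ) * j ≤ m := by exact_mod_cast hKj
  have hmjR : (m : ℝ) + j ≤ (2 * K + 1) * j := by
    have : (m : ℝ) < K * (j + 1) := by exact_mod_cast hmj
    have : (1 : ℝ) ≤ j := by exact_mod_cast hj
    nlinarith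
  have hlower : η ≤ ∑ n ∈ Ico m (m + j), ‖z n‖ ^ 2 / n := by
    refine le_trans ?_ (le_sum_Ico_norm_sq_div hz hε.le (by omega) hzm ?_)
    · rw [div_le_div_iff₀ (by positivity) (by positivity)]
      nlinarith
    · nlinarith
  have hupper : ∑ n ∈ Ico m (m + j), ‖z n‖ ^ 2 / n < η := by
    refine hs _ (disjoint_left.2 fun n hn hns => ?_)
    have := mem_range.1 (hN hns)
    have := (mem_Ico.1 hn).1
    omega
  linarith

end SlowlyVarying

lemma ae_summable_norm_of_summable_integral_norm {Ω E : Type*} [MeasurableSpace Ω]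
    [NormedAddCommGroup E] {μ : Measure Ω} {f : ℕ → Ω → E} (hf : ∀ n, Integrable (f n) μ)
    (hs : Summable fun n => ∫ ω, ‖f n ω‖ ∂μ) : ∀ᵐ ω ∂μ, Summable fun n => ‖f n ω‖ := by
  refine summable_norm_of_tsum_eLpNorm_ne_top le_rfl (fun n => (hf n).1) ?_
  simp_rw [eLpNorm_one_eq_lintegral_enorm, ← ofReal_integral_norm_eq_lintegral_enorm (hf _),
    ← ENNReal.ofReal_tsum_of_nonneg (fun n => integral_nonneg fun _ => norm_nonneg _) hs]
  exact ENNReal.ofReal_ne_top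

/-- Davenport–Erdős–LeVeque criterion: if `|X_n| ≤ 1` and
`Σ (1/n) ∫ |Z_n|² < ∞` where `Z_n = (1/n) Σ_{j=1}^n X_j`, then `Z_n → 0` a.e. -/
theorem davenport_erdos_leveque {Ω : Type*} [MeasurableSpace Ω]
    (μ : Measure Ω) [IsProbabilityMeasure μ] (X : ℕ → Ω → ℂ)
    (hmeas : ∀ n, Measurable (X n)) (hbd : ∀ n ω, ‖X n ω‖ ≤ 1)
    (Z : ℕ → Ω → ℂ)
    (hZ : ∀ n ω, Z n ω = (1 / (n : ℂ)) * ∑ j ∈ Finset.Icc 1 n, X j ω)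
    (hsum : Summable (fun n : ℕ => (1 / (n + 1 : ℝ)) * ∫ ω, ‖Z (n + 1) ω‖ ^ 2 ∂μ)) :
    ∀ᵐ ω ∂μ, Tendsto (fun n => Z n ω) atTop (nhds 0) := by
  have hZ_eq (n : ℕ) (ω : Ω) : Z n ω = cesaroMean (X · ω) n := hZ n ω
  have hZ_meas (n : ℕ) : Measurable (Z n) := by
    rw [funext (hZ n)]
    fun_prop
  have hint (n : ℕ) : Integrable (fun ω => ‖Z n ω‖ ^ 2 / n) μ := by
    refine Integrable.div_const (.of_bound (by fun_prop) 1 (ae_of_all _ fun ω => ?_)) _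
    have hZ_le : ‖Z n ω‖ ≤ 1 := hZ_eq n ω ▸ norm_cesaroMean_le (hbd · ω) n
    simpa using hZ_le
  have hsum' : Summable fun n => ∫ ω, ‖‖Z n ω‖ ^ 2 / n‖ ∂μ := by
    refine (summable_nat_add_iff 1).1 (hsum.congr fun n => ?_)
    simp only [norm_div, norm_pow, norm_norm, Real.norm_natCast, integral_div]
    push_cast
    ring
  filter_upwards [ae_summable_norm_of_summable_integral_norm hint hsum'] with ω hω
  refine tendsto_zero_of_summable_norm_sq_div (C := 2) (fun n m hn hnm => ?_) (by simpa using hω)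
  simpa [hZ_eq] using norm_cesaroMean_sub_le (hbd · ω) hn hnm
end

section
/- Let p₁ < p₂ < ⋯ < p_r be primes and E = S(p₁,…,p_r) = {p₁^{a₁}⋯p_r^{a_r} : a_i ≥ 0}. Then ℤ ∖ E is open in the Bohr topology on ℤ; i.e., E is Bohr-closed. In particular, for every m ∉ E there exists a coset m + Nℤ (N ≥ 1) disjoint from E. -/
/-- The multiplicative semigroup `E = S(p₁,…,p_r)` generated by primes `p₁ < ⋯ < p_r`
is Bohr-closed in `ℤ`: every `m ∉ E` lies in a coset `m + Nℤ` disjoint from `E`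
(cosets of subgroups are Bohr-open, so `ℤ ∖ E` is Bohr-open). -/
theorem semigroup_bohr_closed (r : ℕ) (p : Fin r → ℕ)
    (hp : ∀ i, Nat.Prime (p i)) (hmono : StrictMono p)
    (m : ℤ) (hm : m ∉ {z : ℤ | ∃ a : Fin r → ℕ, z = ∏ i, (p i : ℤ) ^ a i}) :
    ∃ N : ℤ, 1 ≤ N ∧ ∀ t : ℤ,
      m + N * t ∉ {z : ℤ | ∃ a : Fin r → ℕ, z = ∏ i, (p i : ℤ) ^ a i} := by
  have hppos : ∀ i, (0 : ℤ) < (p i : ℤ) := fun i => by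
    exact_mod_cast (hp i).pos
  have hprodpos : ∀ a : Fin r → ℕ, (0 : ℤ) < ∏ i, (p i : ℤ) ^ a i := fun a =>
    Finset.prod_pos fun i _ => pow_pos (hppos i) _
  rcases eq_or_ne m 0 with rfl | hm0
  · -- m = 0 : take a prime q larger than all p i
    obtain ⟨q, hqle, hq⟩ := Nat.exists_infinite_primes ((Finset.univ.sup p) + 1)
    refine ⟨(q : ℤ), by exact_mod_cast hq.one_lt.le, fun t ⟨a, ha⟩ => ?_⟩
    rw [zero_add] at ha
    have hqdvd : (q : ℤ) ∣ ∏ i, (p i : ℤ) ^ a i := ha ▸ Dvd.intro t rfl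
    have hqprime : Prime (q : ℤ) := Nat.prime_iff_prime_int.mp hq
    obtain ⟨i, _, hi⟩ := hqprime.exists_mem_finset_dvd hqdvd
    have : q ∣ p i := by exact_mod_cast hqprime.dvd_of_dvd_pow hi
    have : q = p i := (Nat.prime_dvd_prime_iff_eq hq (hp i)).mp this
    have : p i ≤ Finset.univ.sup p := Finset.le_sup (Finset.mem_univ i)
    omega
  · -- m ≠ 0
    set α : Fin r → ℕ := fun i => (m.natAbs).factorization (p i) with hα
    set A : ℤ := ∏ i, (p i : ℤ) ^ α i with hA
    have hApos : 0 < A := hprodpos α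
    -- A divides m
    have hAdvd : A ∣ m := by
      refine Int.dvd_natAbs.mp ?_
      refine Fintype.prod_dvd_of_coprime (s := fun i => ((p i : ℤ)) ^ α i)
        (z := (m.natAbs : ℤ)) ?_ ?_
      · intro i j hij
        exact (Nat.isCoprime_iff_coprime.mpr
          ((Nat.coprime_primes (hp i) (hp j)).mpr (hmono.injective.ne hij))).pow
      · intro i
        have h0 : ((p i ^ α i : ℕ) : ℤ) ∣ ((m.natAbs : ℕ) : ℤ) :=
          Int.natCast_dvd_natCast.mpr (Nat.ordProj_dvd _ _)
        simpa using h0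
    set n : ℤ := m / A with hn
    have hmAn : m = A * n := (Int.mul_ediv_cancel' hAdvd).symm
    have hndvd : ∀ i, ¬ (p i : ℤ) ∣ n := by
      intro i hdvd
      have h1 : ((p i : ℤ)) ^ (α i + 1) ∣ m := by
        rw [hmAn, pow_succ]
        exact mul_dvd_mul (Finset.dvd_prod_of_mem _ (Finset.mem_univ i)) hdvd
      have h2 : p i ^ (α i + 1) ∣ m.natAbs := by
        rw [← Int.natCast_dvd] ; push_cast ; exact h1
      have := (Nat.Prime.pow_dvd_iff_le_factorization (hp i)
        (Int.natAbs_ne_zero.mpr hm0)).mp h2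
      have hαi : α i = m.natAbs.factorization (p i) := rfl
      omega
    have hn1 : n ≠ 1 := by
      intro h
      exact hm ⟨α, by rw [hmAn, h, mul_one]⟩
    -- choose s
    set s : ℤ := (∏ i, (p i : ℤ)) * (((1 - n).natAbs : ℤ) + 1) with hs
    have hPpos : 0 < ∏ i, (p i : ℤ) := Finset.prod_pos fun i _ => hppos i
    have hspos : 0 < s := mul_pos hPpos (by positivity)
    have hslarge : ((1 - n).natAbs : ℤ) < s := by
      calc ((1 - n).natAbs : ℤ) < ((1 - n).natAbs : ℤ) + 1 := by omega
      _ ≤ s := le_mul_of_one_le_left (by positivity) hPpos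
    have hsdvd : ∀ i, (p i : ℤ) ∣ s :=
      fun i => dvd_mul_of_dvd_left (Finset.dvd_prod_of_mem _ (Finset.mem_univ i)) _
    refine ⟨A * s, ?_, fun t ⟨a, ha⟩ => ?_⟩
    · simpa using Int.lt_iff_add_one_le.mp (mul_pos hApos hspos)
    · set u : ℤ := n + s * t with hu
      have key : A * u = ∏ i, (p i : ℤ) ^ a i := by
        rw [← ha, hmAn]; ring
      have hucop : ∀ i, IsCoprime ((p i : ℤ)) u := by
        intro i
        refine (Nat.prime_iff_prime_int.mp (hp i)).coprime_iff_not_dvd.mpr ?_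
        intro hdvd
        have : (p i : ℤ) ∣ n := (dvd_add_right ((hsdvd i).mul_right t)).mp
          (by rwa [hu, add_comm] at hdvd)
        exact hndvd i this
      have hcop : IsCoprime u (∏ i, (p i : ℤ) ^ a i) :=
        IsCoprime.prod_right fun i _ => ((hucop i).symm.pow_right)
      have hudvd : u ∣ ∏ i, (p i : ℤ) ^ a i := ⟨A, by rw [← key]; ring⟩
      have hunit : IsUnit u := hcop.isUnit_of_dvd' dvd_rfl hudvd
      rcases Int.isUnit_iff.mp hunit with h1 | h1
      · -- u = 1 : s ∣ 1 - n, nonzero, too small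
        have hdvd : s ∣ 1 - n := ⟨t, by omega⟩
        have hne : 1 - n ≠ 0 := fun h => hn1 (by omega)
        have : s ≤ ((1 - n).natAbs : ℤ) := Int.le_of_dvd
          (by exact_mod_cast Int.natAbs_pos.mpr hne)
          ((Int.dvd_natAbs).mpr hdvd)
        omega
      · -- u = -1 : product negative, contradiction
        have := hprodpos a
        rw [← key, h1] at this
        nlinarith
end

section
/- (Interpolation into the ψ₂ Orlicz norm) For f ∈ L^∞ of a probability space, ‖f‖_{ψ₂} ≤ ‖f‖_∞ / √(log(1 + ‖f‖_∞²/‖f‖₂²)), where ψ₂(x) = e^{x²} − 1 and ‖f‖_{ψ₂} = inf{λ > 0 : ∫ ψ₂(|f|/λ) ≤ 1}. -/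
open MeasureTheory

/-- The `ψ₂`-Orlicz (Luxemburg) norm, `ψ₂(x) = e^{x²} - 1`. -/
noncomputable def psi2Norm {Ω : Type*} [MeasurableSpace Ω] (μ : Measure Ω)
    (f : Ω → ℝ) : ℝ :=
  sInf {l : ℝ | 0 < l ∧ ∫ ω, (Real.exp ((|f ω| / l) ^ 2) - 1) ∂μ ≤ 1}

lemma exp_convex_aux {t A : ℝ} (ht0 : 0 ≤ t) (ht1 : t ≤ 1) :
    Real.exp (t * A) - 1 ≤ t * (Real.exp A - 1) := by
  have h := convexOn_exp.2 (Set.mem_univ A) (Set.mem_univ (0:ℝ)) ht0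
    (by linarith : (0:ℝ) ≤ 1 - t) (by ring)
  simp only [smul_eq_mul, mul_zero, add_zero, Real.exp_zero] at h
  nlinarith [h]

/-- Interpolation into the `ψ₂` Orlicz norm: on a probability space,
`‖f‖_{ψ₂} ≤ ‖f‖_∞ / √(log(1 + ‖f‖_∞²/‖f‖₂²))`. -/
theorem psi2_interpolation {Ω : Type*} [MeasurableSpace Ω]
    (μ : Measure Ω) [IsProbabilityMeasure μ] (f : Ω → ℝ)
    (hmeas : Measurable f) (M : ℝ) (hM : 0 < M) (hbd : ∀ᵐ ω ∂μ, |f ω| ≤ M) :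
    psi2Norm μ f ≤ M / Real.sqrt (Real.log (1 + M ^ 2 / ∫ ω, f ω ^ 2 ∂μ)) := by
  set S := ∫ ω, f ω ^ 2 ∂μ with hS
  have hbdd : BddBelow {l : ℝ | 0 < l ∧ ∫ ω, (Real.exp ((|f ω| / l) ^ 2) - 1) ∂μ ≤ 1} :=
    ⟨0, fun x hx => hx.1.le⟩
  -- integrability of f^2
  have hsq_meas : Measurable fun ω => f ω ^ 2 := hmeas.pow_const 2
  have hint2 : Integrable (fun ω => f ω ^ 2) μ := by
    refine Integrable.mono' (integrable_const (M ^ 2)) hsq_meas.aestronglyMeasurable ?_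
    filter_upwards [hbd] with ω hω
    rw [Real.norm_eq_abs, abs_of_nonneg (sq_nonneg _)]
    calc f ω ^ 2 = |f ω| ^ 2 := (sq_abs _).symm
      _ ≤ M ^ 2 := by gcongr
  have hSnonneg : 0 ≤ S := integral_nonneg fun ω => sq_nonneg _
  rcases eq_or_lt_of_le hSnonneg with hS0 | hSpos
  · -- S = 0 : f = 0 a.e.
    have hf0 : (fun ω => f ω ^ 2) =ᵐ[μ] 0 := by
      rw [← integral_eq_zero_iff_of_nonneg (fun ω => sq_nonneg (f ω)) hint2]
      exact hS0.symm
    have hrhs : M / Real.sqrt (Real.log (1 + M ^ 2 / S)) = 0 := by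
      rw [← hS0]; simp
    rw [hrhs]
    have hmem : ∀ ε : ℝ, 0 < ε →
        ε ∈ {l : ℝ | 0 < l ∧ ∫ ω, (Real.exp ((|f ω| / l) ^ 2) - 1) ∂μ ≤ 1} := by
      intro ε hε
      refine ⟨hε, ?_⟩
      have : ∫ ω, (Real.exp ((|f ω| / ε) ^ 2) - 1) ∂μ = ∫ ω, (0:ℝ) ∂μ := by
        refine integral_congr_ae ?_
        filter_upwards [hf0] with ω hω
        have : f ω = 0 := by
          have := pow_eq_zero_iff (n := 2) (by norm_num) |>.mp hω
          exact this
        simp [this]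
      simp [this]
    have key : ∀ ε : ℝ, 0 < ε → psi2Norm μ f ≤ ε := fun ε hε =>
      csInf_le hbdd (hmem ε hε)
    exact le_of_forall_pos_le_add (fun ε hε => by simpa using key ε hε)
  · -- main case
    have hratio : 0 < M ^ 2 / S := div_pos (pow_pos hM 2) hSpos
    set L := Real.log (1 + M ^ 2 / S) with hLdef
    have hL : 0 < L := Real.log_pos (by linarith)
    have hsL : 0 < Real.sqrt L := Real.sqrt_pos.mpr hL
    set lam := M / Real.sqrt L with hlam
    have hlampos : 0 < lam := div_pos hM hsL
    apply csInf_le hbdd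
    refine ⟨hlampos, ?_⟩
    have hexpL : Real.exp L - 1 = M ^ 2 / S := by
      rw [hLdef, Real.exp_log (by linarith)]; ring
    -- pointwise bound
    have hpt : ∀ᵐ ω ∂μ, Real.exp ((|f ω| / lam) ^ 2) - 1 ≤ f ω ^ 2 / S := by
      filter_upwards [hbd] with ω hω
      have harg : (|f ω| / lam) ^ 2 = (f ω ^ 2 / M ^ 2) * L := by
        rw [hlam]
        rw [div_div_eq_mul_div, div_pow, mul_pow, Real.sq_sqrt hL.le, sq_abs]
        ring
      rw [harg]
      have ht0 : 0 ≤ f ω ^ 2 / M ^ 2 := div_nonneg (sq_nonneg _) (sq_nonneg _)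
      have ht1 : f ω ^ 2 / M ^ 2 ≤ 1 := by
        rw [div_le_one (pow_pos hM 2)]
        calc f ω ^ 2 = |f ω| ^ 2 := (sq_abs _).symm
          _ ≤ M ^ 2 := by gcongr
      calc Real.exp ((f ω ^ 2 / M ^ 2) * L) - 1
          ≤ (f ω ^ 2 / M ^ 2) * (Real.exp L - 1) := exp_convex_aux ht0 ht1
        _ = f ω ^ 2 / S := by
            rw [hexpL]; field_simp
    -- integrability of the exp term
    have hexp_meas : Measurable fun ω => Real.exp ((|f ω| / lam) ^ 2) - 1 :=
      (((hmeas.abs.div_const lam).pow_const 2).exp).sub measurable_const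
    have hint1 : Integrable (fun ω => Real.exp ((|f ω| / lam) ^ 2) - 1) μ := by
      refine Integrable.mono' (integrable_const (Real.exp ((M / lam) ^ 2) - 1))
        hexp_meas.aestronglyMeasurable ?_
      filter_upwards [hbd] with ω hω
      rw [Real.norm_eq_abs, abs_of_nonneg (by
        have : (0:ℝ) ≤ (|f ω| / lam) ^ 2 := sq_nonneg _
        have := Real.one_le_exp this
        linarith)]
      have : (|f ω| / lam) ^ 2 ≤ (M / lam) ^ 2 := by
        gcongr
      have := Real.exp_le_exp.mpr this
      linarith
    calc ∫ ω, (Real.exp ((|f ω| / lam) ^ 2) - 1) ∂μ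
        ≤ ∫ ω, f ω ^ 2 / S ∂μ := integral_mono_ae hint1 (hint2.div_const S) hpt
      _ = S / S := by rw [integral_div]
      _ = 1 := div_self hSpos.ne'
end
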